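/- Let α be a real with 0 < α < 1, M = 1, and let n ≥ 1 be an integer, t ≥ 0 a real and x ∈ ℤ. Then (1/(2πi))² ∮ dv ∮ dz [(1+2z)(2v+2−α)/((z−v)(z+v+1))] (1+z)^{x+2n−2} e^{−t(z+1)} (z(1+z))^{−(n−1)} ((v+1)(v+1−α))^{−1}, where the v-contour encloses exactly α−1 and for each v the z-contour encloses exactly 0 and v, equals (1/(2πi))∮ dv (1+v)^{x+n−1} e^{−t(v+1)} v^{−(n−1)} (1+2v)/((v+1−α)(v+α)), where the contour encloses exactly the points 0 and α−1 (and in particular neither −1 nor −α). -/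

import Mathlib

/-
For fixed `v`, the `z`-integral around `v` is the residue of `phiInt` at its simple pole `z = v`,
a function of `v` with a simple pole at `α - 1`, so its `v`-integral is the residue there. In the
remaining term the two circle integrals are swapped (the integrand is continuous on the product of
the circles); the `v`-integral around the simple pole `v = α - 1` then evaluates the rest of the
integrand there, which is exactly `singleInt z`. The residues at `α - 1` of the first part and of
`singleInt` coincide, and the circle around `0` may be resized freely because `singleInt` has no
other singularity near `0`.
-/

open Complex Real MeasureTheory

noncomputable section

/-- Integrand of the double contour integral (`M = 1`, `j = 1` case of `Φ^{n,t}_{n-1}(x)`). -/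
def phiInt (α : ℝ) (n : ℕ) (t : ℝ) (x : ℤ) (v z : ℂ) : ℂ :=
  (1 + 2 * z) * (2 * v + 2 - (α : ℂ)) / ((z - v) * (z + v + 1)) *
    (1 + z) ^ (x + 2 * (n : ℤ) - 2) * Complex.exp (-((t : ℂ) * (z + 1))) *
    (z * (1 + z)) ^ (-((n : ℤ) - 1)) * ((v + 1) * (v + 1 - (α : ℂ)))⁻¹

/-- Integrand of the single contour integral on the right-hand side. -/
def singleInt (α : ℝ) (n : ℕ) (t : ℝ) (x : ℤ) (v : ℂ) : ℂ :=
  (1 + v) ^ (x + (n : ℤ) - 1) * Complex.exp (-((t : ℂ) * (v + 1))) *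
    v ^ (-((n : ℤ) - 1)) * (1 + 2 * v) / ((v + 1 - (α : ℂ)) * (v + (α : ℂ)))

open Metric Function

theorem ContinuousOn.continuous_comp_circleMap_prod {E : Type*} [TopologicalSpace E]
    {f : ℂ → ℂ → E} {c₁ c₂ : ℂ} {R₁ R₂ : ℝ} (h₁ : 0 ≤ R₁) (h₂ : 0 ≤ R₂)
    (hf : ContinuousOn (uncurry f) (sphere c₁ R₁ ×ˢ sphere c₂ R₂)) :
    Continuous fun p : ℝ × ℝ => f (circleMap c₁ R₁ p.1) (circleMap c₂ R₂ p.2) :=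
  hf.comp_continuous (((continuous_circleMap _ _).comp continuous_fst).prodMk
    ((continuous_circleMap _ _).comp continuous_snd)) fun _ =>
    ⟨circleMap_mem_sphere _ h₁ _, circleMap_mem_sphere _ h₂ _⟩

section CircleIntegral

variable {E : Type*} [NormedAddCommGroup E] [NormedSpace ℂ E] {f : ℂ → ℂ → E} {c₁ c₂ : ℂ}
  {R₁ R₂ : ℝ}

theorem ContinuousOn.circleIntegrable_circleIntegral (h₁ : 0 ≤ R₁) (h₂ : 0 ≤ R₂)
    (hf : ContinuousOn (uncurry f) (sphere c₁ R₁ ×ˢ sphere c₂ R₂)) :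
    CircleIntegrable (fun v => ∮ z in C(c₂, R₂), f v z) c₁ R₁ := by
  refine (intervalIntegral.continuous_parametric_intervalIntegral_of_continuous'
    (f := fun θ φ => deriv (circleMap c₂ R₂) φ • f (circleMap c₁ R₁ θ) (circleMap c₂ R₂ φ))
    ?_ 0 (2 * π)).intervalIntegrable _ _
  simp only [deriv_circleMap]
  exact ((continuous_circleMap 0 R₂).comp continuous_snd |>.mul continuous_const).smul
    (hf.continuous_comp_circleMap_prod h₁ h₂)

theorem circleIntegral_comm (h₁ : 0 ≤ R₁) (h₂ : 0 ≤ R₂)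
    (hf : ContinuousOn (uncurry f) (sphere c₁ R₁ ×ˢ sphere c₂ R₂)) :
    (∮ v in C(c₁, R₁), ∮ z in C(c₂, R₂), f v z) = ∮ z in C(c₂, R₂), ∮ v in C(c₁, R₁), f v z := by
  set g : ℝ → ℝ → E := fun θ φ => deriv (circleMap c₁ R₁) θ • deriv (circleMap c₂ R₂) φ •
    f (circleMap c₁ R₁ θ) (circleMap c₂ R₂ φ)
  have hg : Continuous (uncurry g) := by
    simp only [g, deriv_circleMap]
    exact ((continuous_circleMap 0 R₁).comp continuous_fst |>.mul continuous_const).smul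
      (((continuous_circleMap 0 R₂).comp continuous_snd |>.mul continuous_const).smul
        (hf.continuous_comp_circleMap_prod h₁ h₂))
  have hint : Integrable (uncurry g)
      ((volume.restrict (Set.Ioc 0 (2 * π))).prod (volume.restrict (Set.Ioc 0 (2 * π)))) := by
    rw [Measure.prod_restrict, ← Measure.volume_eq_prod]
    exact (hg.continuousOn.integrableOn_compact (isCompact_Icc.prod isCompact_Icc)).mono_set
      (Set.prod_mono Set.Ioc_subset_Icc_self Set.Ioc_subset_Icc_self)
  simp only [circleIntegral, intervalIntegral.integral_of_le two_pi_pos.le, ← integral_smul]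
  rw [integral_integral_swap hint]
  simp only [g, smul_comm (deriv (circleMap c₁ R₁) _)]

theorem circleIntegral_eq_of_differentiableOn_ball_diff {g : ℂ → E} {c : ℂ} {R r₁ r₂ : ℝ}
    (hg : DifferentiableOn ℂ g (ball c R \ {c})) (h₁ : 0 < r₁) (h₁R : r₁ < R) (h₂ : 0 < r₂)
    (h₂R : r₂ < R) : (∮ z in C(c, r₁), g z) = ∮ z in C(c, r₂), g z := by
  wlog h : r₁ ≤ r₂ generalizing r₁ r₂
  · exact (this h₂ h₂R h₁ h₁R (le_of_not_ge h)).symm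
  have hsub : closedBall c r₂ \ ball c r₁ ⊆ ball c R \ {c} := fun z hz =>
    ⟨closedBall_subset_ball h₂R hz.1, fun hzc => hz.2 (hzc ▸ mem_ball_self h₁)⟩
  refine (circleIntegral_eq_of_differentiable_on_annulus_off_countable h₁ h Set.countable_empty
    (hg.continuousOn.mono hsub) fun z hz => hg.differentiableAt ?_).symm
  refine (isOpen_ball.sdiff isClosed_singleton).mem_nhds ⟨ball_subset_ball h₂R.le hz.1.1, ?_⟩
  rintro rfl
  exact hz.1.2 (mem_closedBall_self h₁.le)

end CircleIntegral

theorem ne_zero_of_eq_add_of_norm_lt {a b u : ℂ} (h : a = b + u) (hu : ‖u‖ < ‖b‖) : a ≠ 0 := by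
  rintro rfl
  rw [eq_neg_of_add_eq_zero_right h.symm, norm_neg] at hu
  exact hu.false

theorem norm_ofReal_sub_one {α : ℝ} (hα : α ≤ 1) : ‖(α : ℂ) - 1‖ = 1 - α := by
  rw [← ofReal_one, ← ofReal_sub, norm_real, Real.norm_of_nonpos (by linarith), neg_sub]

theorem norm_two_mul_ofReal_sub_one (α : ℝ) : ‖2 * (α : ℂ) - 1‖ = |2 * α - 1| := by
  rw [show 2 * (α : ℂ) - 1 = ((2 * α - 1 : ℝ) : ℂ) by push_cast; ring, norm_real,
    Real.norm_eq_abs]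

theorem one_add_zpow_mul_mul_zpow_neg {z : ℂ} (hz : 1 + z ≠ 0) (k m : ℤ) :
    (1 + z) ^ (k + 2 * m - 2) * (z * (1 + z)) ^ (-(m - 1)) =
      (1 + z) ^ (k + m - 1) * z ^ (-(m - 1)) := by
  have := zpow_ne_zero (m - 1) hz
  rw [show k + 2 * m - 2 = (k + m - 1) + (m - 1) by ring, zpow_add₀ hz, mul_zpow,
    zpow_neg (1 + z)]
  field_simp

theorem circleIntegral_sub_inv_mul_of_differentiableOn {H : ℂ → ℂ} {c w : ℂ} {R : ℝ}
    (hH : DifferentiableOn ℂ H (closedBall c R)) (hw : w ∈ ball c R) :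
    (∮ z in C(c, R), (z - w)⁻¹ * H z) = 2 * π * I * H w := by
  simpa using hH.circleIntegral_sub_inv_smul hw

section Geometry

variable {α : ℝ}

theorem ne_zero_and_one_add_ne_zero_of_norm_sub_le {w : ℂ} {ρ : ℝ} (hw : ‖w - (α - 1)‖ ≤ ρ)
    (h₁ : ρ < α) (h₂ : ρ < 1 - α) : w ≠ 0 ∧ 1 + w ≠ 0 := by
  refine ⟨ne_zero_of_eq_add_of_norm_lt (b := α - 1) (u := w - (α - 1)) (by ring) ?_,
    ne_zero_of_eq_add_of_norm_lt (b := α) (u := w - (α - 1)) (by ring) ?_⟩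
  · rw [norm_ofReal_sub_one (by linarith [norm_nonneg (w - (α - 1))])]; linarith
  · rw [Complex.norm_of_nonneg (by linarith [norm_nonneg (w - (α - 1))])]; linarith

theorem add_ne_zero_of_norm_sub_le {w : ℂ} {ρ : ℝ} (hw : ‖w - (α - 1)‖ ≤ ρ)
    (h : ρ < |2 * α - 1|) : w + α ≠ 0 :=
  ne_zero_of_eq_add_of_norm_lt (b := 2 * α - 1) (u := w - (α - 1)) (by ring)
    (by rw [norm_two_mul_ofReal_sub_one]; linarith)

theorem one_add_and_add_one_sub_and_add_ne_zero_of_norm_lt {w : ℂ} (h₁ : ‖w‖ < α)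
    (h₂ : ‖w‖ < 1 - α) :
    1 + w ≠ 0 ∧ w + 1 - α ≠ 0 ∧ w + α ≠ 0 := by
  refine ⟨ne_zero_of_eq_add_of_norm_lt (b := 1) (u := w) (by ring) ?_,
    ne_zero_of_eq_add_of_norm_lt (b := -(α - 1)) (u := w) (by ring) ?_,
    ne_zero_of_eq_add_of_norm_lt (b := α) (u := w) (by ring) ?_⟩
  · rw [norm_one]; linarith
  · rw [norm_neg, norm_ofReal_sub_one (by linarith [norm_nonneg w])]; exact h₂
  · rw [Complex.norm_of_nonneg (by linarith [norm_nonneg w])]; exact h₁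

theorem sub_ne_zero_and_add_add_one_ne_zero {z v : ℂ} {rz rv : ℝ} (hz : ‖z‖ ≤ rz)
    (hv : ‖v - (α - 1)‖ ≤ rv) (h₁ : rv + rz < α) (h₂ : rv + rz < 1 - α) :
    z - v ≠ 0 ∧ z + v + 1 ≠ 0 := by
  refine ⟨ne_zero_of_eq_add_of_norm_lt (b := -(α - 1)) (u := z - (v - (α - 1))) (by ring) ?_,
    ne_zero_of_eq_add_of_norm_lt (b := α) (u := z + (v - (α - 1))) (by ring) ?_⟩
  · rw [norm_neg, norm_ofReal_sub_one (by linarith [norm_nonneg z, norm_nonneg (v - (α - 1))])]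
    linarith [norm_sub_le z (v - (α - 1))]
  · rw [Complex.norm_of_nonneg (by linarith [norm_nonneg z, norm_nonneg (v - (α - 1))])]
    linarith [norm_add_le z (v - (α - 1))]

theorem add_add_one_ne_zero_of_norm_sub_le {w v : ℂ} {rz rv : ℝ} (hw : ‖w - v‖ ≤ rz)
    (hv : ‖v - (α - 1)‖ ≤ rv) (h : 2 * rv + rz < |2 * α - 1|) : w + v + 1 ≠ 0 :=
  ne_zero_of_eq_add_of_norm_lt (b := 2 * α - 1) (u := w - v + (v - (α - 1)) + (v - (α - 1)))
    (by ring) (by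
      rw [norm_two_mul_ofReal_sub_one]
      linarith [norm_add₃_le (a := w - v) (b := v - (α - 1)) (c := v - (α - 1))])

end Geometry

/- `phiIntZReg`, `phiIntVReg` and `singleIntReg` are the integrands with their simple pole at
`z = v`, `v = α - 1` and `v = α - 1` respectively removed; `zResidueReg v / (v - (α - 1))` is the
residue of `phiInt α n t x v` at `z = v`. -/

def phiIntZReg (α : ℝ) (n : ℕ) (t : ℝ) (x : ℤ) (v z : ℂ) : ℂ :=
  (1 + 2 * z) * (2 * v + 2 - (α : ℂ)) / (z + v + 1) *
    (1 + z) ^ (x + 2 * (n : ℤ) - 2) * Complex.exp (-((t : ℂ) * (z + 1))) *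
    (z * (1 + z)) ^ (-((n : ℤ) - 1)) * ((v + 1) * (v + 1 - (α : ℂ)))⁻¹

def phiIntVReg (α : ℝ) (n : ℕ) (t : ℝ) (x : ℤ) (v z : ℂ) : ℂ :=
  (1 + 2 * z) * (2 * v + 2 - (α : ℂ)) / ((z - v) * (z + v + 1)) *
    ((1 + z) ^ (x + 2 * (n : ℤ) - 2) * (z * (1 + z)) ^ (-((n : ℤ) - 1))) *
    Complex.exp (-((t : ℂ) * (z + 1))) * (v + 1)⁻¹

def zResidueReg (α : ℝ) (n : ℕ) (t : ℝ) (x : ℤ) (v : ℂ) : ℂ :=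
  (2 * v + 2 - (α : ℂ)) * ((1 + v) ^ (x + 2 * (n : ℤ) - 2) * (v * (1 + v)) ^ (-((n : ℤ) - 1))) *
    Complex.exp (-((t : ℂ) * (v + 1))) * (v + 1)⁻¹

def singleIntReg (α : ℝ) (n : ℕ) (t : ℝ) (x : ℤ) (v : ℂ) : ℂ :=
  (1 + v) ^ (x + (n : ℤ) - 1) * Complex.exp (-((t : ℂ) * (v + 1))) *
    v ^ (-((n : ℤ) - 1)) * (1 + 2 * v) * (v + (α : ℂ))⁻¹

section

variable {α : ℝ} {n : ℕ} {t : ℝ} {x : ℤ}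

theorem phiInt_eq_sub_inv_mul_phiIntZReg (v z : ℂ) :
    phiInt α n t x v z = (z - v)⁻¹ * phiIntZReg α n t x v z := by
  simp only [phiInt, phiIntZReg, div_eq_mul_inv, mul_inv]
  ring

theorem phiInt_eq_sub_inv_mul_phiIntVReg (v z : ℂ) :
    phiInt α n t x v z = (v - (α - 1))⁻¹ * phiIntVReg α n t x v z := by
  simp only [phiInt, phiIntVReg, div_eq_mul_inv, mul_inv, sub_sub_eq_add_sub]
  ring

theorem singleInt_eq_sub_inv_mul_singleIntReg (v : ℂ) :
    singleInt α n t x v = (v - (α - 1))⁻¹ * singleIntReg α n t x v := by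
  simp only [singleInt, singleIntReg, div_eq_mul_inv, mul_inv, sub_sub_eq_add_sub]
  ring

theorem phiIntZReg_self {v : ℂ} (hv : v + v + 1 ≠ 0) :
    phiIntZReg α n t x v v = (v - (α - 1))⁻¹ * zResidueReg α n t x v := by
  have hcancel : (1 + 2 * v) * (2 * v + 2 - α) / (v + v + 1) = 2 * v + 2 - α := by
    rw [show 1 + 2 * v = v + v + 1 by ring, mul_div_right_comm, div_self hv, one_mul]
  simp only [phiIntZReg, zResidueReg, hcancel, sub_sub_eq_add_sub, mul_inv]
  ring

theorem phiIntVReg_ofReal_sub_one {z : ℂ} (hα : α ≠ 0) (hz : 1 + z ≠ 0) :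
    phiIntVReg α n t x (α - 1) z = singleInt α n t x z := by
  have hα' : (α : ℂ) ≠ 0 := ofReal_ne_zero.mpr hα
  simp only [phiIntVReg, singleInt, one_add_zpow_mul_mul_zpow_neg hz]
  rw [show 2 * ((α : ℂ) - 1) + 2 - α = α by ring, show (α : ℂ) - 1 + 1 = α by ring,
    show z - ((α : ℂ) - 1) = z + 1 - α by ring, show z + ((α : ℂ) - 1) + 1 = z + α by ring]
  field_simp

theorem zResidueReg_ofReal_sub_one (hα : α ≠ 0) (h2α : 2 * α - 1 ≠ 0) :
    zResidueReg α n t x (α - 1) = singleIntReg α n t x (α - 1) := by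
  have hα' : (α : ℂ) ≠ 0 := ofReal_ne_zero.mpr hα
  have h2α' : 2 * (α : ℂ) - 1 ≠ 0 := by exact_mod_cast h2α
  simp only [zResidueReg, singleIntReg, one_add_zpow_mul_mul_zpow_neg (z := (α : ℂ) - 1)
    (by simpa using hα)]
  rw [show 2 * ((α : ℂ) - 1) + 2 - α = α by ring, show (α : ℂ) - 1 + 1 = α by ring,
    show 1 + 2 * ((α : ℂ) - 1) = 2 * α - 1 by ring, show (α : ℂ) - 1 + α = 2 * α - 1 by ring,
    mul_inv_cancel_right₀ h2α']
  field_simp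

theorem differentiableAt_phiIntZReg {v z : ℂ} (h₀ : z ≠ 0) (h₁ : 1 + z ≠ 0)
    (h₂ : z + v + 1 ≠ 0) : DifferentiableAt ℂ (phiIntZReg α n t x v) z := by
  unfold phiIntZReg
  fun_prop (disch := simp [*])

theorem differentiableAt_phiIntVReg {v z : ℂ} (h₀ : z - v ≠ 0) (h₁ : z + v + 1 ≠ 0)
    (h₂ : v + 1 ≠ 0) : DifferentiableAt ℂ (phiIntVReg α n t x · z) v := by
  unfold phiIntVReg
  fun_prop (disch := simp [*])

theorem differentiableAt_zResidueReg {v : ℂ} (h₀ : v ≠ 0) (h₁ : 1 + v ≠ 0) :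
    DifferentiableAt ℂ (zResidueReg α n t x) v := by
  have : v + 1 ≠ 0 := by rwa [add_comm]
  unfold zResidueReg
  fun_prop (disch := simp [*])

theorem differentiableAt_singleIntReg {v : ℂ} (h₀ : v ≠ 0) (h₁ : 1 + v ≠ 0) (h₂ : v + α ≠ 0) :
    DifferentiableAt ℂ (singleIntReg α n t x) v := by
  unfold singleIntReg
  fun_prop (disch := simp [*])

theorem differentiableAt_singleInt {v : ℂ} (h₀ : v ≠ 0) (h₁ : 1 + v ≠ 0) (h₂ : v + 1 - α ≠ 0)
    (h₃ : v + α ≠ 0) : DifferentiableAt ℂ (singleInt α n t x) v := by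
  unfold singleInt
  fun_prop (disch := simp [*])

theorem continuousAt_uncurry_phiInt {p : ℂ × ℂ} (h₀ : p.2 ≠ 0) (h₁ : 1 + p.2 ≠ 0)
    (h₂ : p.2 - p.1 ≠ 0) (h₃ : p.2 + p.1 + 1 ≠ 0) (h₄ : p.1 + 1 ≠ 0) (h₅ : p.1 + 1 - α ≠ 0) :
    ContinuousAt (uncurry (phiInt α n t x)) p := by
  unfold uncurry phiInt
  fun_prop (disch := simp [*])

theorem circleIntegral_phiInt_around_self {v : ℂ} {rv rz : ℝ} (hrz : 0 < rz)
    (hv : ‖v - (α - 1)‖ = rv) (h₁ : rv + rz < α) (h₂ : rv + rz < 1 - α)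
    (h₃ : 2 * rv + rz < |2 * α - 1|) :
    (∮ z in C(v, rz), phiInt α n t x v z) =
      2 * π * I * ((v - (α - 1))⁻¹ * zResidueReg α n t x v) := by
  have hpole : ∀ w ∈ closedBall v rz, w + v + 1 ≠ 0 := fun w hw =>
    add_add_one_ne_zero_of_norm_sub_le (mem_closedBall_iff_norm.mp hw) hv.le h₃
  have hreg : DifferentiableOn ℂ (phiIntZReg α n t x v) (closedBall v rz) := fun w hw => by
    have hwc : ‖w - (α - 1)‖ ≤ rv + rz := by
      linarith [norm_sub_le_norm_sub_add_norm_sub w v (α - 1), mem_closedBall_iff_norm.mp hw]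
    obtain ⟨hw₀, hw₁⟩ := ne_zero_and_one_add_ne_zero_of_norm_sub_le hwc h₁ h₂
    exact (differentiableAt_phiIntZReg hw₀ hw₁ (hpole w hw)).differentiableWithinAt
  simp_rw [phiInt_eq_sub_inv_mul_phiIntZReg,
    circleIntegral_sub_inv_mul_of_differentiableOn hreg (mem_ball_self hrz)]
  rw [phiIntZReg_self (hpole v (mem_closedBall_self hrz.le))]

theorem differentiableOn_zResidueReg {ρ : ℝ} (h₁ : ρ < α) (h₂ : ρ < 1 - α) :
    DifferentiableOn ℂ (zResidueReg α n t x) (closedBall ((α : ℂ) - 1) ρ) := by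
  intro w hw
  obtain ⟨hw₀, hw₁⟩ :=
    ne_zero_and_one_add_ne_zero_of_norm_sub_le (mem_closedBall_iff_norm.mp hw) h₁ h₂
  exact (differentiableAt_zResidueReg hw₀ hw₁).differentiableWithinAt

theorem circleIntegral_singleInt_around_ofReal_sub_one {ρ : ℝ} (hρ : 0 < ρ) (h₁ : ρ < α)
    (h₂ : ρ < 1 - α) (h₃ : ρ < |2 * α - 1|) :
    (∮ v in C((α : ℂ) - 1, ρ), singleInt α n t x v) =
      2 * π * I * singleIntReg α n t x (α - 1) := by
  simp_rw [singleInt_eq_sub_inv_mul_singleIntReg]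
  refine circleIntegral_sub_inv_mul_of_differentiableOn (fun w hw => ?_) (mem_ball_self hρ)
  rw [mem_closedBall_iff_norm] at hw
  obtain ⟨hw₀, hw₁⟩ := ne_zero_and_one_add_ne_zero_of_norm_sub_le hw h₁ h₂
  exact (differentiableAt_singleIntReg hw₀ hw₁
    (add_ne_zero_of_norm_sub_le hw h₃)).differentiableWithinAt

theorem continuousOn_uncurry_phiInt {rv rz : ℝ} (hrz : 0 < rz) (hrv : 0 < rv)
    (h₁ : rv + rz < α) (h₂ : rv + rz < 1 - α) :
    ContinuousOn (uncurry (phiInt α n t x)) (sphere ((α : ℂ) - 1) rv ×ˢ sphere 0 rz) := by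
  rintro ⟨v, z⟩ ⟨hv, hz⟩
  rw [mem_sphere_iff_norm] at hv
  rw [mem_sphere_zero_iff_norm] at hz
  obtain ⟨hzv, hzv₁⟩ := sub_ne_zero_and_add_add_one_ne_zero hz.le hv.le h₁ h₂
  obtain ⟨-, hv₁⟩ := ne_zero_and_one_add_ne_zero_of_norm_sub_le hv.le (by linarith) (by linarith)
  obtain ⟨hz₁, -, -⟩ :=
    one_add_and_add_one_sub_and_add_ne_zero_of_norm_lt (α := α) (by linarith) (by linarith)
  have hvc : v + 1 - α ≠ 0 := by
    rw [← sub_sub_eq_add_sub]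
    exact norm_ne_zero_iff.mp (by linarith)
  exact (continuousAt_uncurry_phiInt (norm_ne_zero_iff.mp (by linarith)) hz₁ hzv hzv₁
    (by rwa [add_comm]) hvc).continuousWithinAt

theorem circleIntegral_circleIntegral_phiInt {rv rz : ℝ} (hrz : 0 < rz) (hrv : 0 < rv)
    (h₁ : rv + rz < α) (h₂ : rv + rz < 1 - α) :
    (∮ v in C((α : ℂ) - 1, rv), ∮ z in C(0, rz), phiInt α n t x v z) =
      2 * π * I * ∮ z in C(0, rz), singleInt α n t x z := by
  rw [circleIntegral_comm hrv.le hrz.le (continuousOn_uncurry_phiInt hrz hrv h₁ h₂),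
    ← circleIntegral.integral_const_mul]
  refine circleIntegral.integral_congr hrz.le fun z hz => ?_
  rw [mem_sphere_zero_iff_norm] at hz
  obtain ⟨hz₁, -, -⟩ :=
    one_add_and_add_one_sub_and_add_ne_zero_of_norm_lt (α := α) (by linarith) (by linarith)
  have hreg : DifferentiableOn ℂ (phiIntVReg α n t x · z) (closedBall ((α : ℂ) - 1) rv) :=
    fun v hv => by
      rw [mem_closedBall_iff_norm] at hv
      obtain ⟨hzv, hzv₁⟩ := sub_ne_zero_and_add_add_one_ne_zero hz.le hv h₁ h₂
      obtain ⟨-, hv₁⟩ := ne_zero_and_one_add_ne_zero_of_norm_sub_le hv (by linarith) (by linarith)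
      exact (differentiableAt_phiIntVReg hzv hzv₁ (by rwa [add_comm])).differentiableWithinAt
  simp_rw [phiInt_eq_sub_inv_mul_phiIntVReg (z := z),
    circleIntegral_sub_inv_mul_of_differentiableOn hreg (mem_ball_self hrv)]
  rw [phiIntVReg_ofReal_sub_one (by linarith : 0 < α).ne' hz₁]

theorem differentiableOn_singleInt :
    DifferentiableOn ℂ (singleInt α n t x) (ball 0 (min α (1 - α)) \ {0}) := by
  rintro w ⟨hw, hw₀⟩
  rw [mem_ball_zero_iff, lt_min_iff] at hw
  obtain ⟨hw₁, hwc, hwα⟩ := one_add_and_add_one_sub_and_add_ne_zero_of_norm_lt hw.1 hw.2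
  exact (differentiableAt_singleInt hw₀ hw₁ hwc hwα).differentiableWithinAt

theorem phi_M_one_single_integral_of_radii {rv rz r : ℝ} (hrz : 0 < rz) (hrv : 0 < rv) (hr : 0 < r)
    (h₁ : rv + rz < α) (h₂ : rv + rz < 1 - α) (h₃ : 2 * rv + rz < |2 * α - 1|) (hr₁ : r < α)
    (hr₂ : r < 1 - α) (hr₃ : r < |2 * α - 1|) :
    ((2 * (π : ℂ) * I)⁻¹ * ∮ v in C((α : ℂ) - 1, rv),
        (2 * (π : ℂ) * I)⁻¹ *
          ((∮ z in C((0 : ℂ), rz), phiInt α n t x v z) +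
           (∮ z in C(v, rz), phiInt α n t x v z))) =
      (2 * (π : ℂ) * I)⁻¹ *
        ((∮ v in C((0 : ℂ), r), singleInt α n t x v) +
         (∮ v in C((α : ℂ) - 1, r), singleInt α n t x v)) := by
  have h2πI : 2 * (π : ℂ) * I ≠ 0 := two_pi_I_ne_zero
  have hK : DifferentiableOn ℂ (zResidueReg α n t x) (closedBall ((α : ℂ) - 1) rv) :=
    differentiableOn_zResidueReg (by linarith) (by linarith)
  have hinner : Set.EqOn
      (fun v => (2 * (π : ℂ) * I)⁻¹ * ((∮ z in C((0 : ℂ), rz), phiInt α n t x v z) +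
        ∮ z in C(v, rz), phiInt α n t x v z))
      (fun v => (2 * (π : ℂ) * I)⁻¹ * (∮ z in C((0 : ℂ), rz), phiInt α n t x v z) +
        (v - (α - 1))⁻¹ * zResidueReg α n t x v) (sphere ((α : ℂ) - 1) rv) := fun v hv => by
    simp only [circleIntegral_phiInt_around_self hrz (mem_sphere_iff_norm.mp hv) h₁ h₂ h₃, mul_add,
      inv_mul_cancel_left₀ h2πI]
  have hA : CircleIntegrable (fun v => (2 * (π : ℂ) * I)⁻¹ *
      ∮ z in C((0 : ℂ), rz), phiInt α n t x v z) ((α : ℂ) - 1) rv :=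
    ((continuousOn_uncurry_phiInt hrz hrv h₁ h₂).circleIntegrable_circleIntegral hrv.le
      hrz.le).const_smul
  have hB : CircleIntegrable (fun v => (v - (α - 1))⁻¹ * zResidueReg α n t x v)
      ((α : ℂ) - 1) rv :=
    ContinuousOn.circleIntegrable hrv.le (((continuousOn_id.sub continuousOn_const).inv₀
      fun v hv => sub_ne_zero.mpr (ne_of_mem_sphere hv hrv.ne')).mul
      (hK.continuousOn.mono sphere_subset_closedBall))
  rw [circleIntegral.integral_congr hrv.le hinner, circleIntegral.integral_add hA hB,
    circleIntegral.integral_const_mul, circleIntegral_circleIntegral_phiInt hrz hrv h₁ h₂,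
    circleIntegral_sub_inv_mul_of_differentiableOn hK (mem_ball_self hrv),
    circleIntegral_singleInt_around_ofReal_sub_one hr hr₁ hr₂ hr₃,
    zResidueReg_ofReal_sub_one (hr.trans hr₁).ne' (abs_pos.mp (hr.trans hr₃)),
    circleIntegral_eq_of_differentiableOn_ball_diff differentiableOn_singleInt hrz
      (lt_min (by linarith) (by linarith)) hr (lt_min hr₁ hr₂),
    inv_mul_cancel_left₀ h2πI]

end

theorem phi_M_one_single_integral_general
    (α : ℝ) (hα0 : 0 < α) (hα1 : α < 1) (n : ℕ)
    (t : ℝ) (x : ℤ) :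
    ∃ ε > 0, ∀ rv rz r : ℝ,
      0 < rz → rz < rv → rv < ε → 0 < r → r < ε → r < |2 * α - 1| →
      ((2 * (π : ℂ) * I)⁻¹ * ∮ v in C((α : ℂ) - 1, rv),
          (2 * (π : ℂ) * I)⁻¹ *
            ((∮ z in C((0 : ℂ), rz), phiInt α n t x v z) +
             (∮ z in C(v, rz), phiInt α n t x v z))) =
      (2 * (π : ℂ) * I)⁻¹ *
        ((∮ v in C((0 : ℂ), r), singleInt α n t x v) +
         (∮ v in C((α : ℂ) - 1, r), singleInt α n t x v)) := by
  rcases eq_or_ne α (1 / 2) with rfl | hα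
  · refine ⟨1, one_pos, fun rv rz r _ _ _ hr _ hr₃ => ?_⟩
    norm_num at hr₃
    linarith
  set δ := min (min α (1 - α)) |2 * α - 1|
  have hδ : 0 < δ := lt_min (lt_min hα0 (by linarith)) (abs_pos.mpr fun h => hα (by linarith))
  have hδ₁ : δ ≤ α := (min_le_left _ _).trans (min_le_left _ _)
  have hδ₂ : δ ≤ 1 - α := (min_le_left _ _).trans (min_le_right _ _)
  have hδ₃ : δ ≤ |2 * α - 1| := min_le_right _ _
  refine ⟨δ / 3, by positivity, fun rv rz r hrz hrzv hrv hr hrε hr₃ => ?_⟩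
  exact phi_M_one_single_integral_of_radii hrz (hrz.trans hrzv) hr (by linarith) (by linarith)
    (by linarith) (by linarith) (by linarith) hr₃

/-- For `M = 1` the double contour integral `Φ^{n,t}_{n-1}(x)` (the `v`-contour enclosing
exactly `α-1`, the `z`-contour enclosing exactly `0` and `v`) reduces to a single contour
integral over a contour enclosing exactly `0` and `α-1` (and neither `-1` nor `-α`). -/
theorem phi_M_one_single_integral
    (α : ℝ) (hα0 : 0 < α) (hα1 : α < 1) (n : ℕ) (hn : 1 ≤ n)
    (t : ℝ) (ht : 0 ≤ t) (x : ℤ) :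
    ∃ ε > 0, ∀ rv rz r : ℝ,
      0 < rz → rz < rv → rv < ε → 0 < r → r < ε → r < |2 * α - 1| →
      ((2 * (π : ℂ) * I)⁻¹ * ∮ v in C((α : ℂ) - 1, rv),
          (2 * (π : ℂ) * I)⁻¹ *
            ((∮ z in C((0 : ℂ), rz), phiInt α n t x v z) +
             (∮ z in C(v, rz), phiInt α n t x v z))) =
      (2 * (π : ℂ) * I)⁻¹ *
        ((∮ v in C((0 : ℂ), r), singleInt α n t x v) +
         (∮ v in C((α : ℂ) - 1, r), singleInt α n t x v)) :=
  phi_M_one_single_integral_general α hα0 hα1 n t x
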